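/- Ky Fan's theorem: for a symmetric matrix L ∈ ℝ^{n×n} with eigenvalues σ₁ ≤ σ₂ ≤ ⋯ ≤ σₙ, the minimum of Tr(Fᵀ L F) over all F ∈ ℝ^{n×k} with Fᵀ F = I_k equals σ₁ + σ₂ + ⋯ + σ_k. -/
import Mathlib


open Matrix BigOperators

lemma kf_sum_castLE {n k : ℕ} (hk : k ≤ n) (f : Fin n → ℝ) :
    ∑ i : Fin k, f (Fin.castLE hk i)
      = ∑ i : Fin n, (if (i : ℕ) < k then f i else 0) := by
  rw [Finset.sum_ite, Finset.sum_const_zero, add_zero]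
  have hmap := Finset.sum_map Finset.univ (Fin.castLEEmb hk) f
  simp only [Fin.castLEEmb_apply] at hmap
  rw [← hmap]
  congr 1
  ext x
  simp only [Finset.mem_map, Finset.mem_filter, Finset.mem_univ, true_and,
    Fin.castLEEmb_apply]
  constructor
  · rintro ⟨j, _, rfl⟩; exact j.isLt
  · intro h; exact ⟨⟨x, h⟩, by ext; rfl⟩

lemma kf_key_ineq (n k : ℕ) (hk1 : 1 ≤ k) (hk : k ≤ n)
    (σ : Fin n → ℝ) (hσ : Monotone σ)
    (t : Fin n → ℝ) (h0 : ∀ i, 0 ≤ t i) (h1 : ∀ i, t i ≤ 1)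
    (hs : ∑ i, t i = (k : ℝ)) :
    (∑ i : Fin k, σ (Fin.castLE hk i)) ≤ ∑ i : Fin n, σ i * t i := by
  have hkn : k - 1 < n := by omega
  set c := σ ⟨k - 1, hkn⟩ with hc
  set T : Fin n → ℝ := fun i => if (i : ℕ) < k then 1 else 0 with hT
  have hTs : ∑ i, T i = (k : ℝ) := by
    have := kf_sum_castLE hk (fun _ => (1 : ℝ))
    simpa [hT] using this.symm
  have hσT : ∑ i : Fin k, σ (Fin.castLE hk i) = ∑ i : Fin n, σ i * T i := by
    rw [kf_sum_castLE hk σ]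
    apply Finset.sum_congr rfl
    intro i _
    by_cases h : (i : ℕ) < k <;> simp [hT, h]
  have hterm : ∀ i : Fin n, 0 ≤ (σ i - c) * (t i - T i) := by
    intro i
    by_cases h : (i : ℕ) < k
    · have hle : σ i ≤ c := by
        apply hσ
        rw [Fin.le_def]
        simp only []
        omega
      have hTi : T i = 1 := if_pos h
      have := h1 i
      nlinarith
    · have hge : c ≤ σ i := by
        apply hσ
        rw [Fin.le_def]
        simp only []
        omega
      have hTi : T i = 0 := if_neg h
      have := h0 i
      nlinarith
  have hsum : 0 ≤ ∑ i, (σ i - c) * (t i - T i) :=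
    Finset.sum_nonneg fun i _ => hterm i
  have expand : ∑ i, (σ i - c) * (t i - T i)
      = (∑ i, σ i * t i) - (∑ i, σ i * T i)
        - c * (∑ i, t i) + c * (∑ i, T i) := by
    simp_rw [sub_mul, mul_sub, Finset.sum_sub_distrib, ← Finset.mul_sum]
    ring
  rw [expand, hs, hTs] at hsum
  rw [hσT]
  linarith

theorem ky_fan_theorem (n k : ℕ) (hk1 : 1 ≤ k) (hk : k ≤ n)
    (L : Matrix (Fin n) (Fin n) ℝ) (hL : L.IsSymm)
    (σ : Fin n → ℝ) (hσ : Monotone σ)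
    (U : Matrix (Fin n) (Fin n) ℝ) (hU : Uᵀ * U = 1)
    (hdiag : L = U * Matrix.diagonal σ * Uᵀ) :
    IsLeast
      {x : ℝ | ∃ F : Matrix (Fin n) (Fin k) ℝ,
        Fᵀ * F = 1 ∧ x = Matrix.trace (Fᵀ * L * F)}
      (∑ i : Fin k, σ (Fin.castLE hk i)) := by
  have hUUt : U * Uᵀ = 1 := mul_eq_one_comm.mp hU
  constructor
  · -- membership: F = U.submatrix id castLE
    set f : Fin k → Fin n := Fin.castLE hk with hf
    have hfinj : Function.Injective f := Fin.castLE_injective hk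
    refine ⟨U.submatrix id f, ?_, ?_⟩
    · have : (U.submatrix id f)ᵀ * U.submatrix id f
          = (Uᵀ * U).submatrix f f := by
        rw [Matrix.transpose_submatrix]
        exact (Matrix.submatrix_mul Uᵀ U f id f Function.bijective_id).symm
      rw [this, hU, Matrix.submatrix_one f hfinj]
    · have e1 : L * U.submatrix id f = (L * U).submatrix id f := by
        exact (Matrix.submatrix_mul L U id id f Function.bijective_id).symm
      have e2 : (U.submatrix id f)ᵀ * (L * U).submatrix id f
          = (Uᵀ * (L * U)).submatrix f f := by
        rw [Matrix.transpose_submatrix]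
        exact (Matrix.submatrix_mul Uᵀ (L * U) f id f Function.bijective_id).symm
      have e3 : Uᵀ * (L * U) = Matrix.diagonal σ := by
        rw [hdiag]
        rw [show U * Matrix.diagonal σ * Uᵀ * U = U * Matrix.diagonal σ * (Uᵀ * U) by
          rw [Matrix.mul_assoc]]
        rw [hU, Matrix.mul_one, ← Matrix.mul_assoc, hU, Matrix.one_mul]
      rw [Matrix.mul_assoc, e1, e2, e3, Matrix.submatrix_diagonal σ f hfinj,
        Matrix.trace_diagonal]
      rfl
  · -- lower bound
    rintro x ⟨F, hF, rfl⟩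
    set G := Uᵀ * F with hGdef
    have hGt : Gᵀ = Fᵀ * U := by
      rw [hGdef, Matrix.transpose_mul, Matrix.transpose_transpose]
    have hGG : Gᵀ * G = 1 := by
      rw [hGt, hGdef, Matrix.mul_assoc, ← Matrix.mul_assoc U Uᵀ F, hUUt,
        Matrix.one_mul, hF]
    set P := G * Gᵀ with hPdef
    have hPsymm : Pᵀ = P := by
      rw [hPdef, Matrix.transpose_mul, Matrix.transpose_transpose]
    have hPidem : P * P = P := by
      rw [hPdef, Matrix.mul_assoc, ← Matrix.mul_assoc Gᵀ G Gᵀ, hGG, Matrix.one_mul]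
    have htrace : Matrix.trace (Fᵀ * L * F) = ∑ i, σ i * P i i := by
      have e1 : Fᵀ * L * F = Gᵀ * Matrix.diagonal σ * G := by
        rw [hdiag, hGt, hGdef]
        simp only [Matrix.mul_assoc]
      rw [e1, Matrix.trace_mul_cycle, ← hPdef]
      rw [Matrix.trace]
      apply Finset.sum_congr rfl
      intro i _
      simp [Matrix.diag, Matrix.mul_diagonal, mul_comm]
    have h0 : ∀ i, 0 ≤ P i i := by
      intro i
      rw [hPdef, Matrix.mul_apply]
      exact Finset.sum_nonneg fun j _ => by
        rw [Matrix.transpose_apply]; exact mul_self_nonneg _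
    have hs : ∑ i, P i i = (k : ℝ) := by
      have : ∑ i, P i i = Matrix.trace P := rfl
      rw [this, hPdef, Matrix.trace_mul_comm, hGG, Matrix.trace_one]
      simp
    have h1 : ∀ i, P i i ≤ 1 := by
      intro i
      have hsq : P i i = ∑ j, P i j * P j i := by
        conv_lhs => rw [← hPidem]
        rw [Matrix.mul_apply]
      have hle : P i i * P i i ≤ ∑ j, P i j * P j i := by
        apply Finset.single_le_sum (f := fun j => P i j * P j i)
          ?_ (Finset.mem_univ i)
        intro j _
        have h' : P i j = P j i := congrFun (congrFun hPsymm.symm i) j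
        rw [← h']
        exact mul_self_nonneg _
      rw [← hsq] at hle
      nlinarith [h0 i]
    rw [htrace]
    exact kf_key_ineq n k hk1 hk σ hσ (fun i => P i i) h0 h1 hs
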